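/- arXiv:2410.01115 — 4 statements merged into one kernel-verified Lean document; each statement's English description precedes it below -/
import Mathlib

section
/- For k ∈ {0,1}, let Ω_k = {(z_1, z_2) ∈ ℂ² : |z_2| < exp(−|z_1|^{1/2^k})}. Then for all j, m ∈ ℕ, ∫_{Ω_k} |z_1|^j |z_2|^m dv(z_1,z_2) = (2^{k+2} π² / (m+2)^{2^k(j+2)+1}) · (2^k(j+2) − 1)!. -/
open MeasureTheory Complex

noncomputable section

/-- The domain `Ω_k = {(z₁,z₂) ∈ ℂ² : |z₂| < exp(-|z₁|^{1/2^k})}`. -/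
def OmegaK (k : ℕ) : Set (ℂ × ℂ) :=
  {z : ℂ × ℂ | ‖z.2‖ < Real.exp (-(‖z.1‖ ^ ((1 : ℝ) / 2 ^ k)))}

/-- The `L²(Ω)` norm of a function on `ℂ²`. -/
def L2normC2 (Ω : Set (ℂ × ℂ)) (f : ℂ × ℂ → ℂ) : ℝ :=
  (∫ z in Ω, ‖f z‖ ^ 2) ^ ((1 : ℝ) / 2)

/-- Membership in the Bergman space `A²(Ω)` for `Ω ⊆ ℂ²`. -/
def MemBergmanC2 (Ω : Set (ℂ × ℂ)) (f : ℂ × ℂ → ℂ) : Prop :=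
  DifferentiableOn ℂ f Ω ∧ MemLp f 2 (volume.restrict Ω)

end

/-!
The domain `{‖z₂‖ < exp (-‖z₁‖ ^ p)}` is fibred over `ℂ` by the discs of radius
`R = exp (-‖z₁‖ ^ p)`, and `∫_{‖w‖ < R} ‖w‖ ^ m = 2π R ^ (m + 2) / (m + 2)`. By Tonelli the
moment is therefore the radial integral `2π/(m+2) ∫_ℂ ‖z₁‖ ^ j exp (-(m + 2) ‖z₁‖ ^ p)`, which
polar coordinates turn into a Gamma integral. For `p = 2⁻ᵏ` the Gamma function is evaluated at
the integer `2ᵏ (j + 2)`, giving the factorial.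
-/

open Real Set

namespace Complex

theorem integral_fun_norm {F : Type*} [NormedAddCommGroup F] [NormedSpace ℝ F] (f : ℝ → F) :
    ∫ x : ℂ, f ‖x‖ = (2 * π) • ∫ y in Ioi (0 : ℝ), y • f y := by
  rw [integral_fun_norm_addHaar volume f, finrank_real_complex, measureReal_def,
    Complex.volume_ball]
  simp only [ENNReal.toReal_mul, ENNReal.toReal_pow, ENNReal.toReal_ofReal zero_le_one, one_pow,
    one_mul, ENNReal.coe_toReal, NNReal.coe_real_pi, ← smul_assoc, nsmul_eq_mul, Nat.cast_ofNat,
    Nat.add_one_sub_one, pow_one]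

theorem integral_norm_rpow_mul_exp_neg_mul_rpow {p q b : ℝ} (hp : 0 < p) (hq : -2 < q)
    (hb : 0 < b) :
    ∫ x : ℂ, ‖x‖ ^ q * rexp (-b * ‖x‖ ^ p) =
      (2 * π / p) * b ^ (-(q + 2) / p) * Real.Gamma ((q + 2) / p) := by
  have hshift : ∫ y in Ioi (0 : ℝ), y • (y ^ q * rexp (-b * y ^ p)) =
      ∫ y in Ioi (0 : ℝ), y ^ (q + 1) * rexp (-b * y ^ p) :=
    setIntegral_congr_fun measurableSet_Ioi fun y (hy : 0 < y) => by
      rw [smul_eq_mul, rpow_add_one hy.ne', ← mul_assoc, mul_comm y]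
  rw [integral_fun_norm (fun y => y ^ q * rexp (-b * y ^ p)), hshift,
    _root_.integral_rpow_mul_exp_neg_mul_rpow hp (by linarith) hb, smul_eq_mul]
  ring_nf

theorem integral_ball_norm_pow (m : ℕ) {R : ℝ} (hR : 0 ≤ R) :
    ∫ w in Metric.ball (0 : ℂ) R, ‖w‖ ^ m = 2 * π * R ^ (m + 2) / (m + 2) := by
  have hind : (Metric.ball (0 : ℂ) R).indicator (‖·‖ ^ m) =
      fun w => (Iio R).indicator (· ^ m) ‖w‖ := by
    ext w; simp [indicator]
  rw [← integral_indicator measurableSet_ball, hind, integral_fun_norm]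
  have hpow : ∫ y in Ioi (0 : ℝ), y • (Iio R).indicator (· ^ m) y =
      ∫ y in Ioo (0 : ℝ) R, y ^ (m + 1) := by
    rw [← Ioi_inter_Iio, ← setIntegral_indicator measurableSet_Iio]
    refine setIntegral_congr_fun measurableSet_Ioi fun y _ => ?_
    by_cases hy : y < R <;> simp [hy, pow_succ']
  rw [hpow, ← integral_Ioc_eq_integral_Ioo, ← intervalIntegral.integral_of_le hR, integral_pow,
    smul_eq_mul]
  push_cast
  ring

end Complex

open scoped ENNReal

theorem lintegral_setOf_norm_snd_lt {α : Type*} [MeasurableSpace α] {μ : Measure α} [SFinite μ]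
    {R : α → ℝ} (hR : Measurable R) (hR₀ : ∀ z, 0 ≤ R z) {g : α → ℝ≥0∞} (hg : Measurable g)
    (m : ℕ) :
    ∫⁻ z in {z : α × ℂ | ‖z.2‖ < R z.1}, g z.1 * ENNReal.ofReal (‖z.2‖ ^ m) ∂μ.prod volume =
      ∫⁻ z₁, g z₁ * ENNReal.ofReal (2 * π * R z₁ ^ (m + 2) / (m + 2)) ∂μ := by
  have hS : MeasurableSet {z : α × ℂ | ‖z.2‖ < R z.1} :=
    measurableSet_lt (by fun_prop) (hR.comp measurable_fst)
  rw [← lintegral_indicator hS,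
    lintegral_prod _ ((by fun_prop : Measurable _).indicator hS).aemeasurable]
  refine lintegral_congr fun z₁ => ?_
  have hslice : ∀ w : ℂ,
      {z : α × ℂ | ‖z.2‖ < R z.1}.indicator (fun z => g z.1 * ENNReal.ofReal (‖z.2‖ ^ m)) (z₁, w) =
        (Metric.ball 0 (R z₁)).indicator (fun w => g z₁ * ENNReal.ofReal (‖w‖ ^ m)) w := by
    intro w
    simp [indicator]
  have hint : IntegrableOn (fun w : ℂ => ‖w‖ ^ m) (Metric.ball 0 (R z₁)) :=
    ((continuous_norm.pow m).continuousOn.integrableOn_compact (isCompact_closedBall 0 _)).mono_set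
      Metric.ball_subset_closedBall
  simp_rw [hslice]
  rw [lintegral_indicator measurableSet_ball, lintegral_const_mul _ (by fun_prop),
    ← ofReal_integral_eq_lintegral_ofReal hint (ae_of_all _ fun w => by positivity),
    Complex.integral_ball_norm_pow m (hR₀ z₁)]

theorem integral_norm_pow_mul_norm_pow_setOf_lt_exp_neg_rpow {p : ℝ} (hp : 0 < p) (j m : ℕ) :
    ∫ z in {z : ℂ × ℂ | ‖z.2‖ < rexp (-(‖z.1‖ ^ p))}, ‖z.1‖ ^ j * ‖z.2‖ ^ m =
      2 * π / (m + 2) * ((2 * π / p) * (m + 2) ^ (-(j + 2) / p) * Real.Gamma ((j + 2) / p)) := by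
  set G : ℂ → ℝ := fun z => 2 * π / (m + 2) * (‖z‖ ^ (j : ℝ) * rexp (-(m + 2) * ‖z‖ ^ p))
  have hG : ∫ z, G z =
      2 * π / (m + 2) * ((2 * π / p) * (m + 2) ^ (-(j + 2) / p) * Real.Gamma ((j + 2) / p)) := by
    rw [integral_const_mul, Complex.integral_norm_rpow_mul_exp_neg_mul_rpow hp
      (by linarith [(j.cast_nonneg : (0 : ℝ) ≤ j)]) (by positivity)]
  have hG_pos : 0 < ∫ z, G z := by
    rw [hG]; have := Real.Gamma_pos_of_pos (s := (j + 2) / p) (by positivity); positivity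
  -- integrable because its integral is not the junk value `0`
  have hG_int : Integrable G := .of_integral_ne_zero hG_pos.ne'
  rw [integral_eq_lintegral_of_nonneg_ae (ae_of_all _ fun z => by positivity) (by fun_prop)]
  simp_rw [ENNReal.ofReal_mul (pow_nonneg (norm_nonneg _) _)]
  rw [Measure.volume_eq_prod, lintegral_setOf_norm_snd_lt (R := fun z => rexp (-(‖z‖ ^ p)))
    (g := fun z => ENNReal.ofReal (‖z‖ ^ j)) (by fun_prop) (fun _ => (exp_pos _).le) (by fun_prop),
    ← hG, ← ENNReal.toReal_ofReal hG_pos.le,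
    ofReal_integral_eq_lintegral_ofReal hG_int (ae_of_all _ fun z => by positivity)]
  congr 1
  refine lintegral_congr fun z => ?_
  rw [← ENNReal.ofReal_mul (by positivity), ← Real.exp_nat_mul]
  simp only [G, rpow_natCast]
  push_cast
  ring_nf

theorem momentIntegral_OmegaK_general (k : ℕ) (j m : ℕ) :
    ∫ z in OmegaK k, ‖z.1‖ ^ j * ‖z.2‖ ^ m =
      2 ^ (k + 2) * Real.pi ^ 2 / (m + 2 : ℝ) ^ (2 ^ k * (j + 2) + 1) *
        (Nat.factorial (2 ^ k * (j + 2) - 1)) := by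
  obtain ⟨n, hn⟩ : ∃ n, 2 ^ k * (j + 2) = n + 1 :=
    ⟨_, (Nat.succ_pred_eq_of_pos (by positivity)).symm⟩
  have hexp : ((j : ℝ) + 2) / (1 / 2 ^ k) = n + 1 := by
    rw [div_div_eq_mul_div, div_one, mul_comm]; exact_mod_cast hn
  rw [OmegaK, integral_norm_pow_mul_norm_pow_setOf_lt_exp_neg_rpow (by positivity), neg_div, hexp,
    Real.Gamma_nat_eq_factorial, hn, Nat.add_sub_cancel, rpow_neg (by positivity),
    ← Nat.cast_add_one, rpow_natCast]
  field_simp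
  ring

/-- the moment integrals over the domains `Ω_k`, `k ∈ {0,1}`. -/
theorem momentIntegral_OmegaK (k : ℕ) (hk : k ≤ 1) (j m : ℕ) :
    ∫ z in OmegaK k, ‖z.1‖ ^ j * ‖z.2‖ ^ m =
      2 ^ (k + 2) * Real.pi ^ 2 / (m + 2 : ℝ) ^ (2 ^ k * (j + 2) + 1) *
        (Nat.factorial (2 ^ k * (j + 2) - 1)) :=
  momentIntegral_OmegaK_general k j m
end

section
/- Let Ω_0 = {(z_1, z_2) ∈ ℂ² : |z_2| < exp(−|z_1|)}. Then every monomial z_1^{α_1} z_2^{α_2} (α ∈ ℕ²) belongs to A²(Ω_0), and Ω_0 satisfies Condition D; that is, Σ_{k=1}^∞ ‖z_1^k‖_{L²(Ω_0)}^{−1/k} = ∞ and Σ_{k=1}^∞ ‖z_2^k‖_{L²(Ω_0)}^{−1/k} = ∞. -/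
/-! Over each `z₁ ∈ ℂ` the slice of `Ω₀` is the disc of radius `e^{-|z₁|}`, so by Tonelli
`∫_{Ω₀} |z₁|^a |z₂|^b ≤ π ∫_ℂ |z₁|^a e^{-(b+2)|z₁|} = 2π² (a+1)! / (b+2)^{a+2}`.
Hence every monomial is square integrable, `‖z₁ⁿ‖ ≤ (2(2n+1))ⁿ`, so that `‖z₁ⁿ‖^{-1/n}` dominates a
multiple of the harmonic series, and `‖z₂ⁿ‖ ≤ 1` for `n ≥ 2`, so the terms `‖z₂ⁿ‖^{-1/n}` do not
tend to zero. -/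

open MeasureTheory Complex

open Set Metric Real
open scoped ENNReal Nat

def monomialC2 (a b : ℕ) (z : ℂ × ℂ) : ℂ := z.1 ^ a * z.2 ^ b

lemma continuous_monomialC2 (a b : ℕ) : Continuous (monomialC2 a b) := by
  unfold monomialC2; fun_prop

lemma norm_monomialC2_sq (a b : ℕ) (z : ℂ × ℂ) :
    ‖monomialC2 a b z‖ ^ 2 = ‖monomialC2 (2 * a) (2 * b) z‖ := by
  simp only [monomialC2, norm_mul, norm_pow, mul_pow, ← pow_mul, mul_comm]

def hartogsDomain (R : ℂ → ℝ) : Set (ℂ × ℂ) := {z | ‖z.2‖ < R z.1}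

lemma lintegral_enorm_monomialC2_hartogsDomain_le (R : ℂ → ℝ) (hR : Measurable R) (a b : ℕ) :
    ∫⁻ z in hartogsDomain R, ‖monomialC2 a b z‖ₑ ≤
      ∫⁻ x, ‖x‖ₑ ^ a * ENNReal.ofReal (R x) ^ (b + 2) * NNReal.pi := by
  have hΩ : MeasurableSet (hartogsDomain R) :=
    measurableSet_lt (by fun_prop) (hR.comp measurable_fst)
  rw [← lintegral_indicator hΩ, Measure.volume_eq_prod]
  refine (lintegral_prod_le _).trans (lintegral_mono fun x => ?_)
  have slice : (fun y => (hartogsDomain R).indicator (‖monomialC2 a b ·‖ₑ) (x, y)) =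
      (ball (0 : ℂ) (R x)).indicator fun y => ‖x‖ₑ ^ a * ‖y‖ₑ ^ b := by
    ext y
    simp [hartogsDomain, indicator, monomialC2]
  rw [slice, lintegral_indicator measurableSet_ball]
  calc ∫⁻ y in ball (0 : ℂ) (R x), ‖x‖ₑ ^ a * ‖y‖ₑ ^ b
      ≤ ∫⁻ y in ball (0 : ℂ) (R x), ‖x‖ₑ ^ a * ENNReal.ofReal (R x) ^ b :=
        setLIntegral_mono measurable_const fun y hy => by
          rw [← ofReal_norm y]
          gcongr
          exact (mem_ball_zero_iff.1 hy).le
    _ = ‖x‖ₑ ^ a * ENNReal.ofReal (R x) ^ (b + 2) * NNReal.pi := by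
        rw [setLIntegral_const, Complex.volume_ball]
        ring

lemma Complex.integral_norm_pow_mul_exp_neg_mul_norm (m : ℕ) {c : ℝ} (hc : 0 < c) :
    ∫ x : ℂ, ‖x‖ ^ m * Real.exp (-c * ‖x‖) = 2 * π * (m + 1)! / c ^ (m + 2) := by
  have h := Complex.integral_rpow_mul_exp_neg_mul_rpow (p := 1) (q := m) le_rfl
    (by linarith [m.cast_nonneg (α := ℝ)]) hc
  have hGamma : Real.Gamma ((m : ℝ) + 2) = (m + 1)! := by
    simpa [add_assoc, one_add_one_eq_two] using Real.Gamma_nat_eq_factorial (m + 1)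
  have hpow : c ^ (-((m : ℝ) + 2)) = (c ^ (m + 2))⁻¹ := by
    rw [Real.rpow_neg hc.le]; norm_cast
  simp only [Real.rpow_one, div_one, Real.rpow_natCast] at h
  rw [h, hGamma, hpow]
  field_simp

-- A function that is not integrable has Bochner integral `0`.
lemma Complex.integrable_norm_pow_mul_exp_neg_mul_norm (m : ℕ) {c : ℝ} (hc : 0 < c) :
    Integrable fun x : ℂ => ‖x‖ ^ m * Real.exp (-c * ‖x‖) :=
  Integrable.of_integral_ne_zero <| by
    rw [integral_norm_pow_mul_exp_neg_mul_norm m hc]; positivity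

lemma omegaK_zero_eq : OmegaK 0 = hartogsDomain fun x => Real.exp (-‖x‖) := by
  simp [OmegaK, hartogsDomain]

lemma lintegral_enorm_monomialC2_omegaK_zero_le (a b : ℕ) :
    ∫⁻ z in OmegaK 0, ‖monomialC2 a b z‖ₑ ≤
      ENNReal.ofReal (2 * π ^ 2 * (a + 1)! / (b + 2) ^ (a + 2)) := by
  have hc : (0 : ℝ) < b + 2 := by positivity
  rw [omegaK_zero_eq]
  refine (lintegral_enorm_monomialC2_hartogsDomain_le _ (by fun_prop) a b).trans_eq ?_
  have pointwise : ∀ x : ℂ, ‖x‖ₑ ^ a * ENNReal.ofReal (Real.exp (-‖x‖)) ^ (b + 2) * NNReal.pi =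
      ENNReal.ofReal (π * (‖x‖ ^ a * Real.exp (-(b + 2) * ‖x‖))) := by
    intro x
    rw [← ofReal_norm, ← ENNReal.ofReal_pow (norm_nonneg _),
      ← ENNReal.ofReal_pow (Real.exp_pos _).le, ← Real.exp_nat_mul,
      ENNReal.ofReal_mul (by positivity), ENNReal.ofReal_mul (by positivity),
      ← ENNReal.ofReal_coe_nnreal, NNReal.coe_real_pi]
    push_cast
    ring_nf
  simp_rw [pointwise]
  rw [← ofReal_integral_eq_lintegral_ofReal
      ((integrable_norm_pow_mul_exp_neg_mul_norm a hc).const_mul π)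
      (ae_of_all _ fun x => by positivity),
    integral_const_mul, integral_norm_pow_mul_exp_neg_mul_norm a hc]
  congr 1
  ring

lemma integrableOn_monomialC2_omegaK_zero (a b : ℕ) :
    IntegrableOn (monomialC2 a b) (OmegaK 0) :=
  ⟨(continuous_monomialC2 a b).aestronglyMeasurable,
    (lintegral_enorm_monomialC2_omegaK_zero_le a b).trans_lt ENNReal.ofReal_lt_top⟩

lemma integral_norm_monomialC2_omegaK_zero_le (a b : ℕ) :
    ∫ z in OmegaK 0, ‖monomialC2 a b z‖ ≤ 2 * π ^ 2 * (a + 1)! / (b + 2) ^ (a + 2) := by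
  rw [integral_norm_eq_lintegral_enorm (continuous_monomialC2 a b).aestronglyMeasurable]
  exact ENNReal.toReal_le_of_le_ofReal (by positivity)
    (lintegral_enorm_monomialC2_omegaK_zero_le a b)

lemma integral_norm_monomialC2_omegaK_zero_pos (a b : ℕ) :
    0 < ∫ z in OmegaK 0, ‖monomialC2 a b z‖ := by
  have hΩ : IsOpen (OmegaK 0) := by
    rw [omegaK_zero_eq]
    exact isOpen_lt (by fun_prop) (by fun_prop)
  rw [setIntegral_pos_iff_support_of_nonneg_ae (ae_of_all _ fun _ => norm_nonneg _)
    (integrableOn_monomialC2_omegaK_zero a b).norm]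
  refine ((continuous_monomialC2 a b).norm.isOpen_support.inter hΩ).measure_pos _
    ⟨(1 / 2, 1 / 2), ?_, ?_⟩
  · simp [monomialC2]
  · rw [omegaK_zero_eq]
    show ‖(1 / 2 : ℂ)‖ < Real.exp (-‖(1 / 2 : ℂ)‖)
    norm_num
    linarith [Real.add_one_lt_exp (show (-1 / 2 : ℝ) ≠ 0 by norm_num)]

lemma L2normC2_monomialC2 (Ω : Set (ℂ × ℂ)) (a b : ℕ) :
    L2normC2 Ω (monomialC2 a b) = √(∫ z in Ω, ‖monomialC2 (2 * a) (2 * b) z‖) := by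
  simp only [L2normC2, Real.sqrt_eq_rpow, norm_monomialC2_sq]

lemma memBergmanC2_monomialC2_omegaK_zero (a b : ℕ) :
    MemBergmanC2 (OmegaK 0) (monomialC2 a b) := by
  refine ⟨(by unfold monomialC2; fun_prop : Differentiable ℂ (monomialC2 a b)).differentiableOn,
    (memLp_two_iff_integrable_sq_norm (continuous_monomialC2 a b).aestronglyMeasurable).2 ?_⟩
  simp only [norm_monomialC2_sq]
  exact (integrableOn_monomialC2_omegaK_zero _ _).norm

lemma Nat.factorial_succ_le_pow : ∀ m : ℕ, (m + 1)! ≤ (m + 1) ^ m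
  | 0 => le_refl _
  | m + 1 =>
    calc (m + 2)! = (m + 2) * (m + 1)! := Nat.factorial_succ _
      _ ≤ (m + 2) * (m + 2) ^ m :=
        Nat.mul_le_mul_left _
          ((factorial_succ_le_pow m).trans (Nat.pow_le_pow_left (Nat.le_succ _) _))
      _ = (m + 2) ^ (m + 1) := by rw [pow_succ']

lemma inv_le_rpow_neg_one_div_of_le_pow {x C : ℝ} {n : ℕ} (hx : 0 < x) (hC : 0 < C) (hn : n ≠ 0)
    (h : x ≤ C ^ n) : C⁻¹ ≤ x ^ (-1 / (n : ℝ)) :=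
  calc C⁻¹ = (C ^ n) ^ (-1 / (n : ℝ)) := by
        rw [neg_div, Real.rpow_neg (by positivity), one_div, Real.pow_rpow_inv_natCast hC.le hn]
    _ ≤ x ^ (-1 / (n : ℝ)) :=
        Real.rpow_le_rpow_of_nonpos hx h
          (div_nonpos_of_nonpos_of_nonneg (by norm_num) n.cast_nonneg)

lemma not_summable_of_div_succ_le {f : ℕ → ℝ} {c : ℝ} (hc : 0 < c)
    (hf : ∀ k, c / (k + 1) ≤ f k) : ¬Summable f := fun hs => by
  have hharm : Summable fun k : ℕ => 1 / ((k + 1 : ℕ) : ℝ) := by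
    simpa [div_eq_mul_inv, hc.ne'] using
      (hs.of_nonneg_of_le (fun k => by positivity) hf).mul_left c⁻¹
  exact Real.not_summable_one_div_natCast ((summable_nat_add_iff 1).1 hharm)

lemma L2normC2_monomialC2_omegaK_zero_pos (a b : ℕ) :
    0 < L2normC2 (OmegaK 0) (monomialC2 a b) := by
  rw [L2normC2_monomialC2]
  exact Real.sqrt_pos.2 (integral_norm_monomialC2_omegaK_zero_pos _ _)

lemma L2normC2_monomialC2_left_omegaK_zero_le (n : ℕ) (hn : n ≠ 0) :
    L2normC2 (OmegaK 0) (monomialC2 n 0) ≤ (2 * (2 * n + 1)) ^ n := by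
  rw [L2normC2_monomialC2, Real.sqrt_le_left (by positivity)]
  refine (integral_norm_monomialC2_omegaK_zero_le _ _).trans ?_
  have hfact : ((2 * n + 1)! : ℝ) ≤ (2 * n + 1) ^ (2 * n) := by
    exact_mod_cast Nat.factorial_succ_le_pow (2 * n)
  have h4 : (4 : ℝ) ≤ 4 ^ n := le_self_pow₀ (by norm_num) hn
  have hpi : π ^ 2 < 16 := by nlinarith [Real.pi_lt_four, Real.pi_pos]
  calc _ = π ^ 2 / 2 * ((2 * n + 1)! : ℝ) / 4 ^ n := by
        simp only [CharP.cast_eq_zero, mul_zero, zero_add, pow_add, pow_mul]; norm_num; ring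
    _ ≤ 16 * (2 * n + 1) ^ (2 * n) / 4 ^ n := by
        gcongr
        linarith
    _ ≤ 4 ^ n * (2 * n + 1) ^ (2 * n) := by
        rw [div_le_iff₀ (by positivity), mul_right_comm]
        gcongr
        nlinarith
    _ = ((2 * (2 * n + 1)) ^ n) ^ 2 := by
        rw [← pow_mul, mul_comm n 2, mul_pow, pow_mul (2 : ℝ) 2 n]; norm_num

lemma L2normC2_monomialC2_right_omegaK_zero_le_one (n : ℕ) (hn : 2 ≤ n) :
    L2normC2 (OmegaK 0) (monomialC2 0 n) ≤ 1 := by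
  rw [L2normC2_monomialC2, Real.sqrt_le_one]
  refine (integral_norm_monomialC2_omegaK_zero_le _ _).trans ?_
  have hn' : (2 : ℝ) ≤ n := by exact_mod_cast hn
  rw [div_le_one (by positivity)]
  norm_num
  nlinarith [Real.pi_lt_four, Real.pi_pos]

/-- all monomials belong to `A²(Ω₀)` and `Ω₀` satisfies Condition D. -/
theorem Omega0_monomials_and_conditionD :
    (∀ α : ℕ × ℕ, MemBergmanC2 (OmegaK 0) (fun z => z.1 ^ α.1 * z.2 ^ α.2)) ∧
    (¬ Summable fun k : ℕ =>
      (L2normC2 (OmegaK 0) fun z => z.1 ^ (k + 1)) ^ (-(1 : ℝ) / (k + 1))) ∧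
    (¬ Summable fun k : ℕ =>
      (L2normC2 (OmegaK 0) fun z => z.2 ^ (k + 1)) ^ (-(1 : ℝ) / (k + 1))) := by
  have fst_pow (n : ℕ) : (fun z : ℂ × ℂ => z.1 ^ n) = monomialC2 n 0 := by
    ext z; simp [monomialC2]
  have snd_pow (n : ℕ) : (fun z : ℂ × ℂ => z.2 ^ n) = monomialC2 0 n := by
    ext z; simp [monomialC2]
  refine ⟨fun α => memBergmanC2_monomialC2_omegaK_zero α.1 α.2, ?_, ?_⟩
  · refine not_summable_of_div_succ_le (c := 1 / 6) (by norm_num) fun k => ?_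
    have key := inv_le_rpow_neg_one_div_of_le_pow (L2normC2_monomialC2_omegaK_zero_pos _ _)
      (by positivity) k.succ_ne_zero
      (L2normC2_monomialC2_left_omegaK_zero_le (k + 1) k.succ_ne_zero)
    push_cast at key
    rw [fst_pow]
    calc 1 / 6 / ((k : ℝ) + 1) ≤ (2 * (2 * ((k : ℝ) + 1) + 1))⁻¹ := by
          rw [div_div, one_div]; exact inv_anti₀ (by positivity) (by linarith)
      _ ≤ _ := key
  · intro hs
    obtain ⟨k, hk, hlt⟩ := ((Filter.eventually_ge_atTop 1).and
      (hs.tendsto_atTop_zero.eventually_lt_const one_pos)).exists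
    refine hlt.not_ge ?_
    rw [snd_pow]
    exact Real.one_le_rpow_of_pos_of_le_one_of_nonpos (L2normC2_monomialC2_omegaK_zero_pos _ _)
      (L2normC2_monomialC2_right_omegaK_zero_le_one _ (by omega))
      (div_nonpos_of_nonpos_of_nonneg (by norm_num) (by positivity))
end

section
/- Let f : [0,∞) → (0,∞) be Borel measurable and let Ω = {(z_1, z_2) ∈ ℂ² : |z_2| < f(|z_1|)}. Suppose there exist constants p, C_1, C_2 > 0 such that f(t) ≥ C_1 t^{−p} for all t ≥ C_2. Then for every integer j ≥ p − 1, ∫_Ω |z_1|^{2j} dv(z_1, z_2) = ∞; in particular the monomial z_1^j does not belong to L²(Ω). -/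
open MeasureTheory Complex

/-! Integrating out `z₂` first, the fibre of `Ω` over `z₁` is the disc of radius `f(|z₁|)`, so
`∫_Ω |z₁|^{2j} = ∫_ℂ |z₁|^{2j} π f(|z₁|)² ≥ π C₁² ∫_{|z₁| > C₂} |z₁|^{2j-2p}`.
In polar coordinates the last integral is a multiple of `∫_{C₂}^∞ t^{2j-2p+1} dt`, which diverges
since `2j - 2p ≥ -2`. -/

open Set Metric Module
open scoped ENNReal

section NormRpow

variable {E : Type*} [NormedAddCommGroup E] [NormedSpace ℝ E] [Nontrivial E]
  [FiniteDimensional ℝ E] [MeasurableSpace E] [BorelSpace E] (μ : Measure E) [μ.IsAddHaarMeasure]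

theorem integrableOn_norm_rpow_compl_closedBall_iff {R s : ℝ} (hR : 0 < R) :
    IntegrableOn (fun x : E => ‖x‖ ^ s) (closedBall 0 R)ᶜ μ ↔ s < -(finrank ℝ E) := by
  have hd : 1 ≤ finrank ℝ E := finrank_pos
  calc IntegrableOn (fun x : E => ‖x‖ ^ s) (closedBall 0 R)ᶜ μ
      ↔ Integrable (fun x : E => (Ioi R).indicator (· ^ s) ‖x‖) μ := by
        rw [← integrable_indicator_iff measurableSet_closedBall.compl]
        congr! with x
        by_cases hx : R < ‖x‖ <;> simp [indicator, hx]
    _ ↔ IntegrableOn (fun y : ℝ => (Ioi R).indicator (fun y => y ^ (finrank ℝ E - 1) * y ^ s) y)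
          (Ioi 0) := by
        rw [integrable_fun_norm_addHaar]
        refine integrableOn_congr_fun (fun y _ => ?_) measurableSet_Ioi
        by_cases hy : R < y <;> simp [indicator, hy]
    _ ↔ IntegrableOn (fun y : ℝ => y ^ (s + finrank ℝ E - 1)) (Ioi R) := by
        rw [IntegrableOn, integrable_indicator_iff measurableSet_Ioi, IntegrableOn,
          Measure.restrict_restrict measurableSet_Ioi,
          inter_eq_left.mpr (Ioi_subset_Ioi hR.le)]
        refine integrableOn_congr_fun (fun y (hy : R < y) => ?_) measurableSet_Ioi
        have hy0 : 0 < y := hR.trans hy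
        rw [← Real.rpow_natCast, ← Real.rpow_add hy0, Nat.cast_sub hd]
        ring_nf
    _ ↔ s < -(finrank ℝ E) := by
        rw [integrableOn_Ioi_rpow_iff hR]
        constructor <;> intro h <;> linarith

theorem setLIntegral_compl_closedBall_ofReal_norm_rpow_eq_top {R s : ℝ} (hR : 0 < R)
    (hs : -(finrank ℝ E : ℝ) ≤ s) :
    ∫⁻ x in (closedBall 0 R)ᶜ, ENNReal.ofReal (‖x‖ ^ s) ∂μ = ∞ := by
  rw [← not_ne_iff, lintegral_ofReal_ne_top_iff_integrable
    (measurable_norm.pow_const s).aestronglyMeasurable (.of_forall fun x => by positivity),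
    ← IntegrableOn, integrableOn_norm_rpow_compl_closedBall_iff μ hR]
  exact hs.not_gt

end NormRpow

theorem setLIntegral_prod_comp_fst {α β : Type*} [MeasurableSpace α] [MeasurableSpace β]
    (μ : Measure α) (ν : Measure β) [SFinite ν] {S : Set (α × β)} (hS : MeasurableSet S)
    {g : α → ℝ≥0∞} (hg : Measurable g) :
    ∫⁻ z in S, g z.1 ∂μ.prod ν = ∫⁻ x, g x * ν (Prod.mk x ⁻¹' S) ∂μ := by
  have hg' : Measurable fun z : α × β => g z.1 := hg.comp measurable_fst
  rw [← lintegral_indicator hS, lintegral_prod _ (hg'.indicator hS).aemeasurable]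
  refine lintegral_congr fun x => ?_
  rw [← lintegral_indicator_const (measurable_prodMk_left hS)]
  rfl

theorem setLIntegral_hartogs_comp_fst {f : ℝ → ℝ} (hf : Measurable f) {g : ℂ → ℝ≥0∞}
    (hg : Measurable g) :
    ∫⁻ z in {z : ℂ × ℂ | ‖z.2‖ < f ‖z.1‖}, g z.1 = ∫⁻ x, g x * volume (ball (0 : ℂ) (f ‖x‖)) := by
  have hfibre (x : ℂ) : Prod.mk x ⁻¹' {z : ℂ × ℂ | ‖z.2‖ < f ‖z.1‖} = ball 0 (f ‖x‖) := by
    ext; simp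
  have hΩ : MeasurableSet {z : ℂ × ℂ | ‖z.2‖ < f ‖z.1‖} :=
    measurableSet_lt (by fun_prop) (hf.comp (by fun_prop))
  rw [Measure.volume_eq_prod, setLIntegral_prod_comp_fst _ _ hΩ hg]
  simp_rw [hfibre]

theorem ofReal_rpow_le_pow_mul_volume_ball {p C t r : ℝ} (j : ℕ) (ht : 0 < t) (hC : 0 ≤ C)
    (hr : C * t ^ (-p) ≤ r) :
    ENNReal.ofReal (Real.pi * C ^ 2) * ENNReal.ofReal (t ^ (2 * j - 2 * p)) ≤
      ENNReal.ofReal (t ^ (2 * j)) * volume (ball (0 : ℂ) r) := by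
  have hr₀ : 0 ≤ C * t ^ (-p) := by positivity
  have hpow : t ^ (2 * j - 2 * p) = t ^ (2 * j) * (t ^ (-p)) ^ 2 := by
    rw [← Real.rpow_natCast, ← Real.rpow_natCast, ← Real.rpow_mul ht.le, ← Real.rpow_add ht]
    congr 1
    push_cast
    ring
  rw [Complex.volume_ball, ← ENNReal.ofReal_pow (hr₀.trans hr), ← ENNReal.ofReal_coe_nnreal,
    NNReal.coe_real_pi, ← ENNReal.ofReal_mul (by positivity),
    ← ENNReal.ofReal_mul (by positivity), ← ENNReal.ofReal_mul (by positivity)]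
  refine ENNReal.ofReal_le_ofReal ?_
  calc Real.pi * C ^ 2 * t ^ (2 * j - 2 * p)
      = t ^ (2 * j) * ((C * t ^ (-p)) ^ 2 * Real.pi) := by rw [hpow]; ring
    _ ≤ t ^ (2 * j) * (r ^ 2 * Real.pi) := by gcongr

theorem powerDecay_monomials_not_L2_general (f : ℝ → ℝ) (hf : Measurable f)
    (Ω : Set (ℂ × ℂ)) (hΩ : Ω = {z : ℂ × ℂ | ‖z.2‖ < f ‖z.1‖})
    (p C₁ C₂ : ℝ) (hC₁ : 0 < C₁) (hC₂ : 0 < C₂)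
    (hdecay : ∀ t : ℝ, C₂ ≤ t → C₁ * t ^ (-p) ≤ f t) :
    ∀ j : ℕ, p - 1 ≤ (j : ℝ) →
      (∫⁻ z in Ω, ENNReal.ofReal (‖z.1‖ ^ (2 * j)) = ⊤) ∧
      ¬ MemLp (fun z : ℂ × ℂ => z.1 ^ j) 2 (volume.restrict Ω) := by
  intro j hj
  subst hΩ
  have h_top : ∫⁻ z in {z : ℂ × ℂ | ‖z.2‖ < f ‖z.1‖}, ENNReal.ofReal (‖z.1‖ ^ (2 * j)) = ⊤ := by
    refine top_unique ?_
    calc ⊤ = ENNReal.ofReal (Real.pi * C₁ ^ 2) *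
          ∫⁻ x in (closedBall (0 : ℂ) C₂)ᶜ, ENNReal.ofReal (‖x‖ ^ (2 * j - 2 * p)) := by
          rw [setLIntegral_compl_closedBall_ofReal_norm_rpow_eq_top volume hC₂
            (by simp; linarith), ENNReal.mul_top (by simp; positivity)]
      _ = ∫⁻ x in (closedBall (0 : ℂ) C₂)ᶜ,
          ENNReal.ofReal (Real.pi * C₁ ^ 2) * ENNReal.ofReal (‖x‖ ^ (2 * j - 2 * p)) :=
          (lintegral_const_mul _ (by fun_prop)).symm
      _ ≤ ∫⁻ x in (closedBall (0 : ℂ) C₂)ᶜ,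
          ENNReal.ofReal (‖x‖ ^ (2 * j)) * volume (ball (0 : ℂ) (f ‖x‖)) := by
          refine setLIntegral_mono' measurableSet_closedBall.compl fun x hx => ?_
          have hx₂ : C₂ < ‖x‖ := by simpa using hx
          exact ofReal_rpow_le_pow_mul_volume_ball j (hC₂.trans hx₂) hC₁.le (hdecay _ hx₂.le)
      _ ≤ ∫⁻ x, ENNReal.ofReal (‖x‖ ^ (2 * j)) * volume (ball (0 : ℂ) (f ‖x‖)) :=
          setLIntegral_le_lintegral _ _
      _ = _ := (setLIntegral_hartogs_comp_fst hf (by fun_prop)).symm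
  refine ⟨h_top, fun hmem => ?_⟩
  rw [memLp_two_iff_integrable_sq_norm (by fun_prop),
    ← lintegral_ofReal_ne_top_iff_integrable (by fun_prop) (.of_forall fun _ => by positivity)]
    at hmem
  simp_rw [norm_pow, ← pow_mul'] at hmem
  exact hmem h_top

/-- if the defining function of the Hartogs-type domain
`Ω = {|z₂| < f(|z₁|)}` decays no faster than a power, then the monomials `z₁^j` for
`j ≥ p - 1` fail to be square-integrable on `Ω`. -/
theorem powerDecay_monomials_not_L2 (f : ℝ → ℝ) (hf : Measurable f)
    (hfpos : ∀ t : ℝ, 0 ≤ t → 0 < f t)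
    (Ω : Set (ℂ × ℂ)) (hΩ : Ω = {z : ℂ × ℂ | ‖z.2‖ < f ‖z.1‖})
    (p C₁ C₂ : ℝ) (hp : 0 < p) (hC₁ : 0 < C₁) (hC₂ : 0 < C₂)
    (hdecay : ∀ t : ℝ, C₂ ≤ t → C₁ * t ^ (-p) ≤ f t) :
    ∀ j : ℕ, p - 1 ≤ (j : ℝ) →
      (∫⁻ z in Ω, ENNReal.ofReal (‖z.1‖ ^ (2 * j)) = ⊤) ∧
      ¬ MemLp (fun z : ℂ × ℂ => z.1 ^ j) 2 (volume.restrict Ω) :=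
  powerDecay_monomials_not_L2_general f hf Ω hΩ p C₁ C₂ hC₁ hC₂ hdecay
end

section
/- Let n ≥ 1, let B ⊆ ℂⁿ be an open Euclidean ball centered at the origin, let j ∈ {1,…,n}, and let p = (p_1,…,p_n) ∈ B with p_j ≠ 0. Set Ω = B \ {p}. Then: (1) for all α, β ∈ ℕⁿ with α ≠ β, ∫_Ω z^α · conj(z^β) dv = 0 (so the hypotheses of all three cases of the orthogonality-to-symmetry theorem hold for Ω); but (2) Ω is not Reinhardt, Ω is not circular, and Ω is not Hartogs in the j-th coordinate. -/
open MeasureTheory Complex ComplexConjugate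

/-!
Rotating the `i`-th coordinate by `w ∈ 𝕋` preserves Lebesgue measure and the ball, and multiplies
`z ^ α * conj (z ^ β)` by `w ^ (α i - β i)`. Choosing `w` with `w ^ (α i - β i) ≠ 1` shows that the
integral over the ball equals a multiple `c ≠ 1` of itself, hence vanishes; removing the point `p`
does not change it. On the other hand the involution `z_j ↦ -z_j` (or `z ↦ -z`) preserves the
ball and sends a point of `Ω` to the removed point `p`, so `Ω` has none of the three symmetries.
-/

section Rotation

variable {ι : Type*}

theorem Circle.exists_zpow_ne_one {k : ℤ} (hk : k ≠ 0) : ∃ w : Circle, w ^ k ≠ 1 :=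
  ⟨Circle.exp (Real.pi / k), by
    rw [← Circle.exp_intCast_mul, mul_div_cancel₀ _ (Int.cast_ne_zero.2 hk)]
    exact Circle.exp_pi_ne_one⟩

theorem Circle.exists_pow_mul_conj_pow_ne_one {a b : ℕ} (hab : a ≠ b) :
    ∃ w : Circle, (w : ℂ) ^ a * conj (w : ℂ) ^ b ≠ 1 := by
  obtain ⟨w, hw⟩ := Circle.exists_zpow_ne_one (sub_ne_zero.2 (Nat.cast_injective.ne hab))
  refine ⟨w, fun h => hw ?_⟩
  rw [zpow_sub, zpow_natCast, zpow_natCast, ← Circle.coe_eq_one]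
  push_cast
  rw [← Circle.coe_inv_eq_conj] at h
  simpa [div_eq_mul_inv, inv_pow] using h

noncomputable def circleMulPi (u : ι → Circle) : (ι → ℂ) ≃ᵐ (ι → ℂ) :=
  MeasurableEquiv.piCongrRight fun i => (rotation (u i)).toHomeomorph.toMeasurableEquiv

@[simp]
theorem circleMulPi_apply (u : ι → Circle) (z : ι → ℂ) (i : ι) :
    circleMulPi u z i = u i * z i :=
  rfl

theorem measurePreserving_circleMulPi [Fintype ι] (u : ι → Circle) :
    MeasurePreserving (circleMulPi u) :=
  volume_preserving_pi fun i => (rotation (u i)).measurePreserving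

theorem monomial_mul_conj_circleMulPi [Fintype ι] (u : ι → Circle) (α β : ι → ℕ) (z : ι → ℂ) :
    (∏ i, circleMulPi u z i ^ α i) * conj (∏ i, circleMulPi u z i ^ β i) =
      (∏ i, (u i : ℂ) ^ α i * conj (u i : ℂ) ^ β i) *
        ((∏ i, z i ^ α i) * conj (∏ i, z i ^ β i)) := by
  simp only [circleMulPi_apply, mul_pow, Finset.prod_mul_distrib, map_mul, map_prod, map_pow]
  ring

theorem setIntegral_monomial_mul_conj_eq_zero [Fintype ι] {s : Set (ι → ℂ)}
    (hs : ∀ u : ι → Circle, circleMulPi u ⁻¹' s = s) {α β : ι → ℕ} (hαβ : α ≠ β) :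
    ∫ z in s, (∏ i, z i ^ α i) * conj (∏ i, z i ^ β i) = 0 := by
  classical
  set g : (ι → ℂ) → ℂ := fun z => (∏ i, z i ^ α i) * conj (∏ i, z i ^ β i)
  have hI : ∀ u : ι → Circle,
      (∏ i, (u i : ℂ) ^ α i * conj (u i : ℂ) ^ β i) * ∫ z in s, g z = ∫ z in s, g z := by
    intro u
    calc (∏ i, (u i : ℂ) ^ α i * conj (u i : ℂ) ^ β i) * ∫ z in s, g z
        = ∫ z in circleMulPi u ⁻¹' s, g (circleMulPi u z) := by
          rw [hs u, ← integral_const_mul]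
          simp only [g, monomial_mul_conj_circleMulPi]
      _ = ∫ z in s, g z :=
          (measurePreserving_circleMulPi u).setIntegral_preimage_emb
            (circleMulPi u).measurableEmbedding g s
  obtain ⟨i, hi⟩ := Function.ne_iff.1 hαβ
  obtain ⟨w, hw⟩ := Circle.exists_pow_mul_conj_pow_ne_one hi
  by_contra hI0
  refine hw ?_
  have := (mul_eq_right₀ hI0).1 (hI (Pi.mulSingle i w))
  rwa [Fintype.prod_eq_single i fun k hk => by simp [hk], Pi.mulSingle_eq_same] at this

end Rotation

theorem preimage_setOf_sum_norm_sq_lt {ι : Type*} [Fintype ι] {f : (ι → ℂ) → ι → ℂ}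
    (hf : ∀ z i, ‖f z i‖ = ‖z i‖) (r : ℝ) :
    f ⁻¹' {z | ∑ i, ‖z i‖ ^ 2 < r} = {z | ∑ i, ‖z i‖ ^ 2 < r} := by
  ext z
  simp [hf]

theorem Set.image_diff_singleton_ne {α : Type*} {f : α → α} {s : Set α} {p : α}
    (hf : MapsTo f s s) (hp : p ∈ s) (hfp : f p ≠ p) (hffp : f (f p) = p) :
    f '' (s \ {p}) ≠ s \ {p} := fun h =>
  (h ▸ mem_image_of_mem f ⟨hf hp, hfp⟩ : f (f p) ∈ s \ {p}).2 hffp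

theorem ball_minus_point_orthogonal_but_not_symmetric_general {n : ℕ}
    (R : ℝ) (j : Fin n) (p : Fin n → ℂ)
    (B : Set (Fin n → ℂ)) (hB : B = {z : Fin n → ℂ | ∑ i, ‖z i‖ ^ 2 < R ^ 2})
    (hp : p ∈ B) (hpj : p j ≠ 0)
    (Ω : Set (Fin n → ℂ)) (hΩ : Ω = B \ {p}) :
    (∀ α β : Fin n → ℕ, α ≠ β →
      ∫ z in Ω, (∏ i, z i ^ α i) * (starRingEnd ℂ) (∏ i, z i ^ β i) = 0) ∧
    ¬ (∀ lam : Fin n → ℂ, (∀ i, ‖lam i‖ = 1) →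
        (fun z : Fin n → ℂ => fun i => lam i * z i) '' Ω = Ω) ∧
    ¬ (∀ lam : ℂ, ‖lam‖ = 1 →
        (fun z : Fin n → ℂ => fun i => lam * z i) '' Ω = Ω) ∧
    ¬ (∀ lam : ℂ, ‖lam‖ = 1 →
        (fun z : Fin n → ℂ => Function.update z j (lam * z j)) '' Ω = Ω) := by
  -- `volume` on `Fin n → ℂ` has no atoms only for `n ≠ 0`
  have : Nonempty (Fin n) := ⟨j⟩
  have hneg : (fun i => -1 * p i) ≠ p := fun h => hpj (by simpa [neg_eq_self] using congrFun h j)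
  have hnegj : Function.update p j (-1 * p j) ≠ p := fun h =>
    hpj (by simpa [neg_eq_self] using congrFun h j)
  subst hΩ hB
  refine ⟨fun α β hαβ => ?_, fun h => ?_, fun h => ?_, fun h => ?_⟩
  · rw [setIntegral_congr_set (sdiff_null_ae_eq_self (measure_singleton p))]
    exact setIntegral_monomial_mul_conj_eq_zero
      (fun u => preimage_setOf_sum_norm_sq_lt (by simp [Circle.norm_coe]) _) hαβ
  · refine Set.image_diff_singleton_ne ?_ hp hneg (by simp) (h (fun _ => -1) (by simp))
    exact (preimage_setOf_sum_norm_sq_lt (by simp) _).ge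
  · refine Set.image_diff_singleton_ne ?_ hp hneg (by simp) (h (-1) (by simp))
    exact (preimage_setOf_sum_norm_sq_lt (by simp) _).ge
  · refine Set.image_diff_singleton_ne ?_ hp hnegj (by simp) (h (-1) (by simp))
    refine (preimage_setOf_sum_norm_sq_lt (fun z i => ?_) _).ge
    rcases eq_or_ne i j with rfl | hij <;> simp [*]

/-- Let `B` be a Euclidean ball centered at the origin, `p ∈ B` with
`p j ≠ 0`, and `Ω = B \ {p}`. Then the monomials are pairwise orthogonal over `Ω`, yet
`Ω` is neither Reinhardt, circular, nor Hartogs in the `j`-th coordinate. -/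
theorem ball_minus_point_orthogonal_but_not_symmetric {n : ℕ} (hn : 1 ≤ n)
    (R : ℝ) (hR : 0 < R) (j : Fin n) (p : Fin n → ℂ)
    (B : Set (Fin n → ℂ)) (hB : B = {z : Fin n → ℂ | ∑ i, ‖z i‖ ^ 2 < R ^ 2})
    (hp : p ∈ B) (hpj : p j ≠ 0)
    (Ω : Set (Fin n → ℂ)) (hΩ : Ω = B \ {p}) :
    (∀ α β : Fin n → ℕ, α ≠ β →
      ∫ z in Ω, (∏ i, z i ^ α i) * (starRingEnd ℂ) (∏ i, z i ^ β i) = 0) ∧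
    ¬ (∀ lam : Fin n → ℂ, (∀ i, ‖lam i‖ = 1) →
        (fun z : Fin n → ℂ => fun i => lam i * z i) '' Ω = Ω) ∧
    ¬ (∀ lam : ℂ, ‖lam‖ = 1 →
        (fun z : Fin n → ℂ => fun i => lam * z i) '' Ω = Ω) ∧
    ¬ (∀ lam : ℂ, ‖lam‖ = 1 →
        (fun z : Fin n → ℂ => Function.update z j (lam * z j)) '' Ω = Ω) :=
  ball_minus_point_orthogonal_but_not_symmetric_general R j p B hB hp hpj Ω hΩ
end
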